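/- arXiv:2107.01724 — 5 statements merged into one kernel-verified Lean document; each statement's English description precedes it below -/
import Mathlib

section
/- Let G ∈ ℝⁿˣᴺ be a matrix with columns g₁, …, g_N, let H ∈ ℝᴸˣⁿ, h ∈ ℝᴸ, c ∈ ℝⁿ, and let α ∈ ℝᴺ with α ≥ 0 componentwise. Then Hc + |HG| α ≤ h (componentwise, where |HG| is the entrywise absolute value of the matrix HG) if and only if for every θ ∈ ℝᴺ with |θᵢ| ≤ αᵢ for all i, one has H(c + Σᵢ₌₁ᴺ θᵢ gᵢ) ≤ h componentwise. -/
/-!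
Since `∑ᵢ θᵢ gᵢ = Gθ`, row `l` of the condition reads `(Hc)ₗ + (HG)ₗ ⬝ θ ≤ hₗ`. The maximum of the
linear form `θ ↦ a ⬝ θ` over the box `|θᵢ| ≤ αᵢ` is `|a| ⬝ α`, attained at `θᵢ = sign(aᵢ) αᵢ`; so
the condition for all `θ` in the box is, row by row, `(Hc)ₗ + (|HG| α)ₗ ≤ hₗ`.
-/

open Matrix

theorem abs_sign_mul_le {α : Type*} [Ring α] [LinearOrder α] [IsStrictOrderedRing α]
    (a : α) {b : α} (hb : 0 ≤ b) : |(SignType.sign a : α) * b| ≤ b := by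
  rw [abs_mul, abs_of_nonneg hb]
  exact mul_le_of_le_one_left hb (by cases SignType.sign a <;> simp)

section BoxMaximum

variable {ι α : Type*} [Fintype ι] [Ring α] [LinearOrder α] [IsStrictOrderedRing α]

theorem dotProduct_le_abs_dotProduct_of_abs_le {a θ β : ι → α} (hθ : ∀ i, |θ i| ≤ β i) :
    a ⬝ᵥ θ ≤ |a| ⬝ᵥ β :=
  Finset.sum_le_sum fun i _ => calc
    a i * θ i ≤ |a i * θ i| := le_abs_self _
    _ = |a i| * |θ i| := abs_mul _ _
    _ ≤ |a i| * β i := mul_le_mul_of_nonneg_left (hθ i) (abs_nonneg _)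

theorem dotProduct_sign_mul (a β : ι → α) :
    a ⬝ᵥ (fun i => (SignType.sign (a i) : α) * β i) = |a| ⬝ᵥ β :=
  Finset.sum_congr rfl fun i _ => by simp only [Pi.abs_apply, ← mul_assoc, self_mul_sign]

theorem forall_abs_le_dotProduct_le_iff {a β : ι → α} (hβ : 0 ≤ β) (b : α) :
    (∀ θ : ι → α, (∀ i, |θ i| ≤ β i) → a ⬝ᵥ θ ≤ b) ↔ |a| ⬝ᵥ β ≤ b := by
  refine ⟨fun h => ?_, fun h θ hθ => (dotProduct_le_abs_dotProduct_of_abs_le hθ).trans h⟩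
  rw [← dotProduct_sign_mul]
  exact h _ fun i => abs_sign_mul_le (a i) (hβ i)

end BoxMaximum

theorem sum_smul_col_eq_mulVec {m ι R : Type*} [Fintype ι] [CommSemiring R]
    (G : Matrix m ι R) (θ : ι → R) : ∑ i, θ i • (fun r => G r i) = G *ᵥ θ := by
  ext r
  simp [mulVec, dotProduct, mul_comm]

/-- `Hc + |HG| α ≤ h` iff for every `θ` with `|θᵢ| ≤ αᵢ`, `H(c + ∑ᵢ θᵢ gᵢ) ≤ h`,
where `gᵢ` is the `i`-th column of `G`. -/
theorem stmt_8 {n N L : ℕ} (G : Matrix (Fin n) (Fin N) ℝ) (H : Matrix (Fin L) (Fin n) ℝ)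
    (h : Fin L → ℝ) (c : Fin n → ℝ) (α : Fin N → ℝ) (hα : 0 ≤ α) :
    H.mulVec c + ((H * G).map (fun a => |a|)).mulVec α ≤ h ↔
      ∀ θ : Fin N → ℝ, (∀ i, |θ i| ≤ α i) →
        H.mulVec (c + ∑ i, θ i • (fun r => G r i)) ≤ h := by
  simp only [sum_smul_col_eq_mulVec, mulVec_add, mulVec_mulVec, Pi.le_def,
    ← le_sub_iff_add_le']
  exact (forall_congr' fun l => (forall_abs_le_dotProduct_le_iff hα _).symm).trans
    ⟨fun hrow θ hθ l => hrow l θ hθ, fun hbox l θ hθ => hbox θ hθ l⟩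
end

section
/- Let G ∈ ℝⁿˣᴺ be a matrix with columns g₁, …, g_N, let H ∈ ℝᴸˣⁿ, h ∈ ℝᴸ, c ∈ ℝⁿ, and let α ∈ ℝᴺ with 0 ≤ αᵢ ≤ 1 for all i. If Hc + |HG| α ≤ h componentwise (where |HG| is the entrywise absolute value of HG), then the zonotope with generators α₁ g₁, …, α_N g_N and center c is contained in the polyhedron {x ∈ ℝⁿ | Hx ≤ h}. -/
/-- The zonotope with generators `g 1, …, g N` and center `c`. -/
def zonotope {n N : ℕ} (g : Fin N → (Fin n → ℝ)) (c : Fin n → ℝ) : Set (Fin n → ℝ) :=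
  {x | ∃ θ : Fin N → ℝ, (∀ i, θ i ∈ Set.Icc (-1 : ℝ) 1) ∧ x = c + ∑ i, θ i • g i}

/-!
A point of the zonotope is `c + G (θ ⊙ α)` with `|θᵢ| ≤ 1`, so its image under `H` is
`Hc + (HG)(θ ⊙ α)`, and each entry of `(HG)(θ ⊙ α)` is bounded by the corresponding entry of
`|HG| α` term by term.
-/

open Matrix

theorem sum_smul_smul_col_eq_mulVec {R m k : Type*} [CommSemiring R] [Fintype k]
    (G : Matrix m k R) (θ α : k → R) :
    ∑ i, θ i • α i • (fun r => G r i) = G *ᵥ (θ * α) := by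
  ext r
  simp only [Finset.sum_apply, Pi.smul_apply, smul_eq_mul, mulVec, dotProduct, Pi.mul_apply]
  exact Finset.sum_congr rfl fun i _ => by ring

theorem mulVec_mul_le_map_abs_mulVec {R m k : Type*} [Ring R] [LinearOrder R]
    [IsStrictOrderedRing R] [Fintype k] (M : Matrix m k R) {θ α : k → R}
    (hθ : ∀ i, |θ i| ≤ 1) (hα : 0 ≤ α) :
    M *ᵥ (θ * α) ≤ M.map (fun a => |a|) *ᵥ α := by
  intro r
  refine Finset.sum_le_sum fun i _ => ?_
  calc M r i * (θ i * α i) ≤ |M r i * (θ i * α i)| := le_abs_self _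
    _ = |M r i| * |θ i| * α i := by rw [abs_mul, abs_mul, abs_of_nonneg (hα i), mul_assoc]
    _ ≤ |M r i| * 1 * α i :=
        mul_le_mul_of_nonneg_right (mul_le_mul_of_nonneg_left (hθ i) (abs_nonneg _)) (hα i)
    _ = |M r i| * α i := by rw [mul_one]

/-- If `Hc + |HG| α ≤ h` with `0 ≤ αᵢ ≤ 1`, then the zonotope with generators `αᵢ gᵢ`
(`gᵢ` the columns of `G`) and center `c` is contained in the polyhedron `{x | Hx ≤ h}`. -/
theorem stmt_9 {n N L : ℕ} (G : Matrix (Fin n) (Fin N) ℝ) (H : Matrix (Fin L) (Fin n) ℝ)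
    (h : Fin L → ℝ) (c : Fin n → ℝ) (α : Fin N → ℝ) (hα : ∀ i, α i ∈ Set.Icc (0 : ℝ) 1)
    (hineq : H.mulVec c + ((H * G).map (fun a => |a|)).mulVec α ≤ h) :
    zonotope (fun i => α i • (fun r => G r i)) c ⊆ {x | H.mulVec x ≤ h} := by
  rintro x ⟨θ, hθ, rfl⟩
  have hθ_abs : ∀ i, |θ i| ≤ 1 := fun i => abs_le.mpr (hθ i)
  have hα_nonneg : 0 ≤ α := fun i => (hα i).1
  simp only [Set.mem_ofPred_eq, sum_smul_smul_col_eq_mulVec, mulVec_add, mulVec_mulVec]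
  exact (add_le_add_right (mulVec_mul_le_map_abs_mulVec (H * G) hθ_abs hα_nonneg) _).trans hineq
end

section
/- Let Z be the zonotope with generators g₁, …, g_N ∈ ℝⁿ and center c ∈ ℝⁿ, and let Z' be the zonotope with generators α₁ g₁, …, α_N g_N and center c' ∈ ℝⁿ, where αᵢ ∈ [0,1] for all i (i.e., Z' is aligned with Z). Then the Minkowski difference Z ⊖ Z' equals the zonotope with generators (1−α₁) g₁, …, (1−α_N) g_N and center c − c'. -/
/-- Minkowski difference: `X ⊖ Y = {z | ∀ y ∈ Y, z + y ∈ X}`. -/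
def mdiff {n : ℕ} (X Y : Set (Fin n → ℝ)) : Set (Fin n → ℝ) :=
  {z | ∀ y ∈ Y, z + y ∈ X}

/-!
If `z + y ∈ Z` for all `y ∈ Z'`, then for every linear functional `f` the maximum of `f` over
`Z'` plus `f z` is at most the maximum over `Z`. For a zonotope this maximum is
`f c + ∑ |f gᵢ|`, so `f z ≤ f (c - c') + ∑ (1 - αᵢ) |f gᵢ|`, the maximum of `f` over the
candidate zonotope; as that set is closed and convex, Hahn–Banach puts `z` in it.
Conversely, `(1 - αᵢ) θᵢ + αᵢ φᵢ` is a convex combination of `θᵢ, φᵢ ∈ [-1, 1]`.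
-/

open Set

section

variable {n N : ℕ} (g : Fin N → (Fin n → ℝ)) (c : Fin n → ℝ)

lemma zonotope_eq_image :
    zonotope g c = (c + ·) '' (Fintype.linearCombination ℝ g '' univ.pi fun _ => Icc (-1) 1) := by
  ext x
  simp only [zonotope, mem_ofPred_eq, mem_image, mem_pi, mem_univ, true_implies,
    Fintype.linearCombination_apply, exists_exists_and_eq_and, eq_comm (a := x)]

lemma convex_zonotope : Convex ℝ (zonotope g c) := by
  rw [zonotope_eq_image]
  exact ((convex_pi fun _ _ => convex_Icc _ _).linear_image _).translate c

lemma isCompact_zonotope : IsCompact (zonotope g c) := by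
  rw [zonotope_eq_image]
  exact ((isCompact_univ_pi fun _ => isCompact_Icc).image
    (Fintype.linearCombination ℝ g).continuous_of_finiteDimensional).image
    (continuous_const_add c)

variable {g c}

lemma apply_le_of_mem_zonotope (f : Module.Dual ℝ (Fin n → ℝ)) {x : Fin n → ℝ}
    (hx : x ∈ zonotope g c) : f x ≤ f c + ∑ i, |f (g i)| := by
  obtain ⟨θ, hθ, rfl⟩ := hx
  simp only [map_add, map_sum, map_smul, smul_eq_mul, add_le_add_iff_left]
  gcongr with i
  calc θ i * f (g i) ≤ |θ i * f (g i)| := le_abs_self _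
    _ = |θ i| * |f (g i)| := abs_mul _ _
    _ ≤ 1 * |f (g i)| := by gcongr; exact abs_le.2 (hθ i)
    _ = |f (g i)| := one_mul _

variable (g c) in
lemma exists_mem_zonotope_apply_eq (f : Module.Dual ℝ (Fin n → ℝ)) :
    ∃ x ∈ zonotope g c, f x = f c + ∑ i, |f (g i)| := by
  let θ : Fin N → ℝ := fun i => if 0 ≤ f (g i) then 1 else -1
  refine ⟨c + ∑ i, θ i • g i, ⟨θ, fun i => ?_, rfl⟩, ?_⟩
  · unfold θ; split_ifs <;> norm_num
  · simp only [map_add, map_sum, map_smul, smul_eq_mul]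
    congr 1
    refine Finset.sum_congr rfl fun i _ => ?_
    unfold θ
    split_ifs with h
    · rw [one_mul, abs_of_nonneg h]
    · rw [abs_of_neg (not_le.1 h), neg_one_mul]

lemma mem_zonotope_of_forall_apply_le {x : Fin n → ℝ}
    (hx : ∀ f : Module.Dual ℝ (Fin n → ℝ), f x ≤ f c + ∑ i, |f (g i)|) : x ∈ zonotope g c := by
  by_contra hxZ
  obtain ⟨f, u, hfZ, hux⟩ :=
    geometric_hahn_banach_closed_point (convex_zonotope g c) (isCompact_zonotope g c).isClosed hxZ
  obtain ⟨y, hyZ, hfy⟩ := exists_mem_zonotope_apply_eq g c (f : Module.Dual ℝ (Fin n → ℝ))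
  have hfyu := hfZ y hyZ
  have hfx := hx f
  simp only [ContinuousLinearMap.coe_coe] at hfy hfx
  linarith

lemma add_mem_zonotope_of_aligned {α : Fin N → ℝ} (hα : ∀ i, α i ∈ Icc (0 : ℝ) 1)
    {c₁ c₂ x y : Fin n → ℝ} (hx : x ∈ zonotope (fun i => (1 - α i) • g i) c₁)
    (hy : y ∈ zonotope (fun i => α i • g i) c₂) :
    x + y ∈ zonotope g (c₁ + c₂) := by
  obtain ⟨θ, hθ, rfl⟩ := hx
  obtain ⟨φ, hφ, rfl⟩ := hy
  refine ⟨fun i => (1 - α i) * θ i + α i * φ i, fun i => ?_, ?_⟩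
  · obtain ⟨hθ₁, hθ₂⟩ := hθ i
    obtain ⟨hφ₁, hφ₂⟩ := hφ i
    obtain ⟨hα₀, hα₁⟩ := hα i
    constructor <;> nlinarith
  · simp only [add_smul, mul_smul, Finset.sum_add_distrib, smul_comm (θ _) (1 - α _),
      smul_comm (φ _) (α _)]
    abel

end

/-- Minkowski difference of a zonotope and an aligned zonotope amounts to
generator-wise subtraction. -/
theorem stmt_10 {n N : ℕ} (g : Fin N → (Fin n → ℝ)) (c c' : Fin n → ℝ)
    (α : Fin N → ℝ) (hα : ∀ i, α i ∈ Set.Icc (0 : ℝ) 1) :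
    mdiff (zonotope g c) (zonotope (fun i => α i • g i) c')
      = zonotope (fun i => (1 - α i) • g i) (c - c') := by
  ext z
  constructor
  · intro hz
    refine mem_zonotope_of_forall_apply_le fun f => ?_
    obtain ⟨y, hy, hfy⟩ := exists_mem_zonotope_apply_eq (fun i => α i • g i) c' f
    have hzy := apply_le_of_mem_zonotope f (hz y hy)
    simp only [map_add, map_sub, map_smul, smul_eq_mul, abs_mul,
      abs_of_nonneg (hα _).1, abs_of_nonneg (sub_nonneg.2 (hα _).2)] at hfy hzy ⊢
    simp only [sub_mul, one_mul, Finset.sum_sub_distrib]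
    linarith
  · intro hz y hy
    simpa using add_mem_zonotope_of_aligned hα hz hy
end

section
/- Let A be a linear map from ℝⁿˣ to ℝⁿˣ, B a linear map from ℝⁿᵘ to ℝⁿˣ, E a linear map from ℝⁿʷ to ℝⁿˣ, K ∈ ℝⁿˣ, and let U ⊆ ℝⁿᵘ, W ⊆ ℝⁿʷ and X ⊆ ℝⁿˣ be sets with W nonempty. Then {x ∈ ℝⁿˣ | ∃ u ∈ U, ∀ w ∈ W, Ax + Bu + Ew + K ∈ X} = {x ∈ ℝⁿˣ | Ax ∈ ((X ⊖ E·W) ⊕ (−B)·U) + (−K)}, where E·W = {Ew | w ∈ W}, (−B)·U = {−Bu | u ∈ U}, ⊕ is Minkowski sum, ⊖ is Minkowski difference, and S + v denotes the translate of a set S by a vector v. -/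
open Pointwise

theorem Set.mem_add_image_add_singleton_iff {G α : Type*} [AddCommGroup G] {S : Set G}
    {g : α → G} {U : Set α} {a c : G} :
    a ∈ S + g '' U + {c} ↔ ∃ u ∈ U, a - c - g u ∈ S := by
  rw [Set.add_singleton, Set.image_add_right, Set.mem_preimage, Set.mem_add]
  constructor
  · rintro ⟨s, hs, _, ⟨u, hu, rfl⟩, hsu⟩
    exact ⟨u, hu, by rwa [sub_eq_add_neg a c, ← hsu, add_sub_cancel_right]⟩
  · rintro ⟨u, hu, hS⟩
    exact ⟨_, hS, g u, ⟨u, hu, rfl⟩, by rw [sub_add_cancel, sub_eq_add_neg]⟩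

theorem mem_mdiff_image_iff {m n : ℕ} {X : Set (Fin n → ℝ)} {f : (Fin m → ℝ) → Fin n → ℝ}
    {W : Set (Fin m → ℝ)} {z : Fin n → ℝ} :
    z ∈ mdiff X (f '' W) ↔ ∀ w ∈ W, z + f w ∈ X :=
  Set.forall_mem_image

theorem stmt_13_general {nx nu nw : ℕ}
    (A : (Fin nx → ℝ) →ₗ[ℝ] (Fin nx → ℝ)) (B : (Fin nu → ℝ) →ₗ[ℝ] (Fin nx → ℝ))
    (E : (Fin nw → ℝ) →ₗ[ℝ] (Fin nx → ℝ)) (K : Fin nx → ℝ)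
    (U : Set (Fin nu → ℝ)) (W : Set (Fin nw → ℝ)) (X : Set (Fin nx → ℝ)) :
    {x : Fin nx → ℝ | ∃ u ∈ U, ∀ w ∈ W, A x + B u + E w + K ∈ X}
      = {x : Fin nx → ℝ | A x ∈ (mdiff X (⇑E '' W) + ⇑(-B) '' U) + {-K}} := by
  ext x
  simp only [Set.mem_ofPred_eq, Set.mem_add_image_add_singleton_iff, mem_mdiff_image_iff,
    LinearMap.neg_apply, sub_neg_eq_add, add_right_comm _ K]

/-- The one-step backward reachable set rewritten via Minkowski arithmetic:
`{x | ∃ u ∈ U, ∀ w ∈ W, Ax + Bu + Ew + K ∈ X} = {x | Ax ∈ (X ⊖ E·W) ⊕ (−B)·U + (−K)}`. -/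
theorem stmt_13 {nx nu nw : ℕ}
    (A : (Fin nx → ℝ) →ₗ[ℝ] (Fin nx → ℝ)) (B : (Fin nu → ℝ) →ₗ[ℝ] (Fin nx → ℝ))
    (E : (Fin nw → ℝ) →ₗ[ℝ] (Fin nx → ℝ)) (K : Fin nx → ℝ)
    (U : Set (Fin nu → ℝ)) (W : Set (Fin nw → ℝ)) (X : Set (Fin nx → ℝ))
    (hW : W.Nonempty) :
    {x : Fin nx → ℝ | ∃ u ∈ U, ∀ w ∈ W, A x + B u + E w + K ∈ X}
      = {x : Fin nx → ℝ | A x ∈ (mdiff X (⇑E '' W) + ⇑(-B) '' U) + {-K}} :=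
  stmt_13_general A B E K U W X
end

section
/- Let A be an invertible linear map from ℝⁿˣ to ℝⁿˣ, B a linear map from ℝⁿᵘ to ℝⁿˣ, E a linear map from ℝⁿʷ to ℝⁿˣ, K ∈ ℝⁿˣ, and let U ⊆ ℝⁿᵘ, W ⊆ ℝⁿʷ be sets with W nonempty. Define the backward reachable sets X₀ = Z₀ and X_{k+1} = {x ∈ ℝⁿˣ | ∃ u ∈ U, ∀ w ∈ W, Ax + Bu + Ew + K ∈ X_k} for a set Z₀ ⊆ ℝⁿˣ. Suppose (Ŵ_k)_{k≥0} and (W̌_k)_{k≥0} are sequences of sets in ℝⁿˣ with W̌_k ⊆ E·W ⊆ Ŵ_k for all k, and define Z̲₀ = Z̄₀ = Z₀, Z̲_{k+1} = A⁻¹·(((Z̲_k ⊖ Ŵ_k) ⊕ (−B)·U) + (−K)) and Z̄_{k+1} = A⁻¹·(((Z̄_k ⊖ W̌_k) ⊕ (−B)·U) + (−K)). Then Z̲_k ⊆ X_k ⊆ Z̄_k for all k ≥ 0. -/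
/-!
Writing `S ⊖ V` for the Minkowski difference, the one-step backward reachable set of `S` is exactly
`A⁻¹·(((S ⊖ E·W) ⊕ (−B)·U) + (−K))`. This expression is monotone in `S` and antitone in the set
subtracted, so replacing `E·W` by the larger `Ŵₖ` (resp. the smaller `W̌ₖ`) and inducting on `k`
sandwiches `Xₖ` between `Z̲ₖ` and `Z̄ₖ`.
-/

open Pointwise

@[gcongr]
theorem mdiff_mono {n : ℕ} {X X' Y Y' : Set (Fin n → ℝ)} (hX : X ⊆ X') (hY : Y' ⊆ Y) :
    mdiff X Y ⊆ mdiff X' Y' :=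
  fun _ hz y hy => hX (hz y (hY hy))

theorem mem_symm_image_add_neg_image_add_neg {R M N : Type*} [Ring R] [AddCommGroup M]
    [AddCommGroup N] [Module R M] [Module R N] (A : M ≃ₗ[R] M) (B : N →ₗ[R] M) (K : M)
    (Y : Set M) (U : Set N) (x : M) :
    x ∈ ⇑A.symm '' ((Y + ⇑(-B) '' U) + {-K}) ↔ ∃ u ∈ U, A x + B u + K ∈ Y := by
  simp only [LinearEquiv.image_symm_eq_preimage, Set.mem_preimage, Set.add_singleton,
    Set.mem_image, Set.mem_add, LinearMap.neg_apply]
  constructor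
  · rintro ⟨_, ⟨y, hy, _, ⟨u, hu, rfl⟩, rfl⟩, hx⟩
    refine ⟨u, hu, ?_⟩
    convert hy using 1
    rw [← hx]
    abel
  · rintro ⟨u, hu, hx⟩
    exact ⟨_, ⟨_, hx, _, ⟨u, hu, rfl⟩, rfl⟩, by abel⟩

theorem setOf_backwardReachable_eq {nx nu nw : ℕ}
    (A : (Fin nx → ℝ) ≃ₗ[ℝ] (Fin nx → ℝ)) (B : (Fin nu → ℝ) →ₗ[ℝ] (Fin nx → ℝ))
    (E : (Fin nw → ℝ) →ₗ[ℝ] (Fin nx → ℝ)) (K : Fin nx → ℝ)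
    (U : Set (Fin nu → ℝ)) (W : Set (Fin nw → ℝ)) (S : Set (Fin nx → ℝ)) :
    {x | ∃ u ∈ U, ∀ w ∈ W, A x + B u + E w + K ∈ S} =
      ⇑A.symm '' ((mdiff S (⇑E '' W) + ⇑(-B) '' U) + {-K}) := by
  ext x
  rw [mem_symm_image_add_neg_image_add_neg]
  simp only [Set.mem_ofPred_eq, mdiff, Set.forall_mem_image, add_right_comm _ K]

theorem stmt_14_general {nx nu nw : ℕ}
    (A : (Fin nx → ℝ) ≃ₗ[ℝ] (Fin nx → ℝ)) (B : (Fin nu → ℝ) →ₗ[ℝ] (Fin nx → ℝ))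
    (E : (Fin nw → ℝ) →ₗ[ℝ] (Fin nx → ℝ)) (K : Fin nx → ℝ)
    (U : Set (Fin nu → ℝ)) (W : Set (Fin nw → ℝ))
    (Z₀ : Set (Fin nx → ℝ))
    (X : ℕ → Set (Fin nx → ℝ))
    (hX0 : X 0 = Z₀)
    (hX : ∀ k, X (k + 1) = {x : Fin nx → ℝ | ∃ u ∈ U, ∀ w ∈ W, A x + B u + E w + K ∈ X k})
    (What Wcheck : ℕ → Set (Fin nx → ℝ))
    (hWlo : ∀ k, Wcheck k ⊆ ⇑E '' W) (hWhi : ∀ k, ⇑E '' W ⊆ What k)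
    (Zlo Zhi : ℕ → Set (Fin nx → ℝ))
    (hZlo0 : Zlo 0 = Z₀) (hZhi0 : Zhi 0 = Z₀)
    (hZlo : ∀ k, Zlo (k + 1) = ⇑A.symm '' ((mdiff (Zlo k) (What k) + ⇑(-B) '' U) + {-K}))
    (hZhi : ∀ k, Zhi (k + 1) = ⇑A.symm '' ((mdiff (Zhi k) (Wcheck k) + ⇑(-B) '' U) + {-K})) :
    ∀ k, Zlo k ⊆ X k ∧ X k ⊆ Zhi k := by
  intro k
  induction k with
  | zero => simp only [hX0, hZlo0, hZhi0, subset_refl, and_self]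
  | succ k ih =>
    rw [hX, setOf_backwardReachable_eq, hZlo, hZhi]
    exact ⟨by gcongr; exacts [ih.1, hWhi k], by gcongr; exacts [ih.2, hWlo k]⟩

/-- Zonotopic-style under/over-approximation of backward reachable sets: if
`W̌ₖ ⊆ E·W ⊆ Ŵₖ` and the sequences `Z̲`, `Z̄` follow the recursions
`Z̲ₖ₊₁ = A⁻¹·((Z̲ₖ ⊖ Ŵₖ) ⊕ (−B)·U + (−K))`, `Z̄ₖ₊₁ = A⁻¹·((Z̄ₖ ⊖ W̌ₖ) ⊕ (−B)·U + (−K))`,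
then `Z̲ₖ ⊆ Xₖ ⊆ Z̄ₖ` for all `k`. -/
theorem stmt_14 {nx nu nw : ℕ}
    (A : (Fin nx → ℝ) ≃ₗ[ℝ] (Fin nx → ℝ)) (B : (Fin nu → ℝ) →ₗ[ℝ] (Fin nx → ℝ))
    (E : (Fin nw → ℝ) →ₗ[ℝ] (Fin nx → ℝ)) (K : Fin nx → ℝ)
    (U : Set (Fin nu → ℝ)) (W : Set (Fin nw → ℝ)) (hW : W.Nonempty)
    (Z₀ : Set (Fin nx → ℝ))
    (X : ℕ → Set (Fin nx → ℝ))
    (hX0 : X 0 = Z₀)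
    (hX : ∀ k, X (k + 1) = {x : Fin nx → ℝ | ∃ u ∈ U, ∀ w ∈ W, A x + B u + E w + K ∈ X k})
    (What Wcheck : ℕ → Set (Fin nx → ℝ))
    (hWlo : ∀ k, Wcheck k ⊆ ⇑E '' W) (hWhi : ∀ k, ⇑E '' W ⊆ What k)
    (Zlo Zhi : ℕ → Set (Fin nx → ℝ))
    (hZlo0 : Zlo 0 = Z₀) (hZhi0 : Zhi 0 = Z₀)
    (hZlo : ∀ k, Zlo (k + 1) = ⇑A.symm '' ((mdiff (Zlo k) (What k) + ⇑(-B) '' U) + {-K}))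
    (hZhi : ∀ k, Zhi (k + 1) = ⇑A.symm '' ((mdiff (Zhi k) (Wcheck k) + ⇑(-B) '' U) + {-K})) :
    ∀ k, Zlo k ⊆ X k ∧ X k ⊆ Zhi k :=
  stmt_14_general A B E K U W Z₀ X hX0 hX What Wcheck hWlo hWhi Zlo Zhi hZlo0 hZhi0 hZlo hZhi
end
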